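/- Let x > 0 be a vector in ℝ^N. Then I_A^b(P(x)) = I_A^b(x) holds if and only if x is a fixed point of the EM operator, i.e. P(x) = x. -/

import Mathlib

open Finset Filter Topology

noncomputable def dd {M N : ℕ} (A : Fin M → Fin N → ℝ) (x : Fin N → ℝ) (i : Fin M) : ℝ :=
  ∑ j, A i j * x j

noncomputable def ff {M N : ℕ} (A : Fin M → Fin N → ℝ) (b : Fin M → ℝ) (x : Fin N → ℝ) (j : Fin N) : ℝ :=
  ∑ i, A i j * b i / dd A x i

noncomputable def EMop {M N : ℕ} (A : Fin M → Fin N → ℝ) (b : Fin M → ℝ) (x : Fin N → ℝ) : Fin N → ℝ :=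
  fun j => x j * ff A b x j

noncomputable def KL {N : ℕ} (u v : Fin N → ℝ) : ℝ :=
  (∑ j, u j * Real.log (u j / v j)) - ∑ j, (u j - v j)

noncomputable def IAb {M N : ℕ} (A : Fin M → Fin N → ℝ) (b : Fin M → ℝ) (x : Fin N → ℝ) : ℝ :=
  (∑ i, b i * Real.log (b i / dd A x i)) - ∑ i, (b i - dd A x i)

noncomputable def finSup0 {ι : Type*} (s : Finset ι) (g : ι → ℝ) : ℝ :=
  if h : s.Nonempty then s.sup' h g else 0

noncomputable def finInf0 {ι : Type*} (s : Finset ι) (g : ι → ℝ) : ℝ :=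
  if h : s.Nonempty then s.inf' h g else 0

/-! The EM step decreases the objective by at least the Kullback–Leibler divergence of the new
iterate from the old one: `I(x) - I(Px) ≥ KL(Px, x)`. Writing `Px_j = x_j f_j(x)`, this follows
from the concavity of `log` (Jensen) applied, for each row `i`, with the weights
`a_ij x_j / d_i(x)`, together with `∑_i d_i(y) = ∑_j y_j` for column-stochastic `A`.
Since `KL(u, v) ≥ 0` with equality only for `u = v`, `I(Px) = I(x)` forces `Px = x`. -/

open Real InformationTheory

section KL

variable {N : ℕ} {u v : Fin N → ℝ}

lemma KL_eq_sum_mul_klFun (hv : ∀ j, 0 < v j) : KL u v = ∑ j, v j * klFun (u j / v j) := by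
  rw [KL, ← sum_sub_distrib]
  refine sum_congr rfl fun j _ => ?_
  have := (hv j).ne'
  rw [klFun_apply]
  field_simp
  ring

lemma KL_nonneg (hu : ∀ j, 0 ≤ u j) (hv : ∀ j, 0 < v j) : 0 ≤ KL u v := by
  rw [KL_eq_sum_mul_klFun hv]
  exact sum_nonneg fun j _ => mul_nonneg (hv j).le (klFun_nonneg (div_nonneg (hu j) (hv j).le))

lemma KL_eq_zero_iff (hu : ∀ j, 0 ≤ u j) (hv : ∀ j, 0 < v j) : KL u v = 0 ↔ u = v := by
  have hterm j : 0 ≤ v j * klFun (u j / v j) :=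
    mul_nonneg (hv j).le (klFun_nonneg (div_nonneg (hu j) (hv j).le))
  rw [KL_eq_sum_mul_klFun hv, sum_eq_zero_iff_of_nonneg fun j _ => hterm j, funext_iff]
  refine forall_congr' fun j => ?_
  rw [mul_eq_zero, or_iff_right (hv j).ne', klFun_eq_zero_iff (div_nonneg (hu j) (hv j).le),
    div_eq_one_iff_eq (hv j).ne']
  simp

end KL

section EM

variable {M N : ℕ} {A : Fin M → Fin N → ℝ} {b : Fin M → ℝ} {x : Fin N → ℝ}

lemma dd_pos (hA : ∀ i j, 0 ≤ A i j) (hrow : ∀ i, ∃ j, 0 < A i j) (hx : ∀ j, 0 < x j)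
    (i : Fin M) : 0 < dd A x i := by
  obtain ⟨j, hj⟩ := hrow i
  exact sum_pos' (fun k _ => mul_nonneg (hA i k) (hx k).le) ⟨j, mem_univ j, mul_pos hj (hx j)⟩

lemma ff_pos (hA : ∀ i j, 0 ≤ A i j) (hcol : ∀ j, ∑ i, A i j = 1) (hb : ∀ i, 0 < b i)
    (hd : ∀ i, 0 < dd A x i) (j : Fin N) : 0 < ff A b x j := by
  obtain ⟨i, hi⟩ : ∃ i, 0 < A i j := by
    by_contra! h
    simpa [le_antisymm (h _) (hA _ j)] using hcol j
  exact sum_pos' (fun k _ => div_nonneg (mul_nonneg (hA k j) (hb k).le) (hd k).le)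
    ⟨i, mem_univ i, div_pos (mul_pos hi (hb i)) (hd i)⟩

lemma sum_dd (hcol : ∀ j, ∑ i, A i j = 1) (y : Fin N → ℝ) : ∑ i, dd A y i = ∑ j, y j := by
  simp only [dd]
  rw [sum_comm]
  exact sum_congr rfl fun j _ => by rw [← sum_mul, hcol j, one_mul]

lemma IAb_sub_IAb {y : Fin N → ℝ} (hb : ∀ i, 0 < b i) (hdx : ∀ i, 0 < dd A x i)
    (hdy : ∀ i, 0 < dd A y i) :
    IAb A b x - IAb A b y =
      ∑ i, b i * log (dd A y i / dd A x i) - (∑ i, dd A y i - ∑ i, dd A x i) := by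
  simp only [IAb, ← sum_sub_distrib]
  refine sum_congr rfl fun i _ => ?_
  rw [log_div (hb i).ne' (hdx i).ne', log_div (hb i).ne' (hdy i).ne',
    log_div (hdy i).ne' (hdx i).ne']
  ring

lemma KL_EMop_eq (hx : ∀ j, 0 < x j) :
    KL (EMop A b x) x =
      ∑ j, EMop A b x j * log (ff A b x j) - (∑ j, EMop A b x j - ∑ j, x j) := by
  rw [KL, sum_sub_distrib]
  congr 2 with j
  rw [EMop, mul_div_cancel_left₀ _ (hx j).ne']

lemma sum_EMop_mul_log_ff :
    ∑ j, EMop A b x j * log (ff A b x j) =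
      ∑ i, b i * ∑ j, A i j * x j / dd A x i * log (ff A b x j) := by
  simp only [EMop, ff, mul_sum, sum_mul]
  rw [sum_comm]
  exact sum_congr rfl fun i _ => sum_congr rfl fun j _ => by ring

lemma sum_mul_log_le_log_dd_div {g : Fin N → ℝ} (hA : ∀ i j, 0 ≤ A i j) (hx : ∀ j, 0 < x j)
    (hg : ∀ j, 0 < g j) {i : Fin M} (hd : 0 < dd A x i) :
    ∑ j, A i j * x j / dd A x i * log (g j) ≤ log (dd A (fun j => x j * g j) i / dd A x i) := by
  have hw : ∀ j ∈ univ, 0 ≤ A i j * x j / dd A x i := fun j _ =>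
    div_nonneg (mul_nonneg (hA i j) (hx j).le) hd.le
  have hw1 : ∑ j, A i j * x j / dd A x i = 1 := by rw [← sum_div]; exact div_self hd.ne'
  have hmean : ∑ j, A i j * x j / dd A x i * g j = dd A (fun j => x j * g j) i / dd A x i := by
    rw [show dd A (fun j => x j * g j) i = ∑ j, A i j * (x j * g j) from rfl, sum_div]
    exact sum_congr rfl fun j _ => by ring
  simpa only [smul_eq_mul, hmean] using
    strictConcaveOn_log_Ioi.concaveOn.le_map_sum hw hw1 fun j _ => Set.mem_Ioi.2 (hg j)

theorem KL_EMop_le_IAb_sub (hA : ∀ i j, 0 ≤ A i j) (hcol : ∀ j, ∑ i, A i j = 1)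
    (hrow : ∀ i, ∃ j, 0 < A i j) (hb : ∀ i, 0 < b i) (hx : ∀ j, 0 < x j) :
    KL (EMop A b x) x ≤ IAb A b x - IAb A b (EMop A b x) := by
  have hd := dd_pos hA hrow hx
  have hf := ff_pos hA hcol hb hd
  have hdP := dd_pos hA hrow fun j => mul_pos (hx j) (hf j)
  calc KL (EMop A b x) x
      = ∑ i, b i * ∑ j, A i j * x j / dd A x i * log (ff A b x j)
          - (∑ i, dd A (EMop A b x) i - ∑ i, dd A x i) := by
        rw [KL_EMop_eq hx, sum_EMop_mul_log_ff, sum_dd hcol, sum_dd hcol]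
    _ ≤ ∑ i, b i * log (dd A (EMop A b x) i / dd A x i)
          - (∑ i, dd A (EMop A b x) i - ∑ i, dd A x i) := by
        gcongr with i
        · exact (hb i).le
        · exact sum_mul_log_le_log_dd_div hA hx hf (hd i)
    _ = IAb A b x - IAb A b (EMop A b x) := (IAb_sub_IAb hb hd hdP).symm

end EM

theorem stmt_2_general
    (M N : ℕ)
    (A : Fin M → Fin N → ℝ) (b : Fin M → ℝ)
    (hA : ∀ i j, 0 ≤ A i j)
    (hcol : ∀ j, ∑ i, A i j = 1)
    (hrow : ∀ i, ∃ j, 0 < A i j)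
    (hb : ∀ i, 0 < b i)
    (x : Fin N → ℝ) (hx : ∀ j, 0 < x j) :
    IAb A b (EMop A b x) = IAb A b x ↔ EMop A b x = x := by
  refine ⟨fun h => ?_, fun h => by rw [h]⟩
  have hP : ∀ j, 0 ≤ EMop A b x j := fun j =>
    (mul_pos (hx j) (ff_pos hA hcol hb (dd_pos hA hrow hx) j)).le
  refine (KL_eq_zero_iff hP hx).mp (le_antisymm ?_ (KL_nonneg hP hx))
  simpa [h] using KL_EMop_le_IAb_sub hA hcol hrow hb hx

theorem stmt_2
    (M N : ℕ) (hM : 0 < M) (hN : 0 < N)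
    (A : Fin M → Fin N → ℝ) (b : Fin M → ℝ)
    (hA : ∀ i j, 0 ≤ A i j)
    (hcol : ∀ j, ∑ i, A i j = 1)
    (hrow : ∀ i, ∃ j, 0 < A i j)
    (hb : ∀ i, 0 < b i)
    (x : Fin N → ℝ) (hx : ∀ j, 0 < x j) :
    IAb A b (EMop A b x) = IAb A b x ↔ EMop A b x = x :=
  stmt_2_general M N A b hA hcol hrow hb x hx
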